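/- Let a > 0, ρ₁ > 0, ρ₂ > 0 be real numbers, let θ ∈ (0, π], and let d be a real number with |ρ₁ − ρ₂| ≤ d ≤ ρ₁ + ρ₂. If cosh(a·d) ≥ cosh(a·ρ₁)·cosh(a·ρ₂) − sinh(a·ρ₁)·sinh(a·ρ₂)·cos(θ), then sin²(θ/2) ≤ exp(−a·(ρ₁ + ρ₂ − d)), and consequently (a/2)·(ρ₁ + ρ₂ − d) ≤ log(π/θ). -/

import Mathlib

/-!
Writing `u = aρ₁`, `v = aρ₂` and `2s = aD`, the law of cosines becomes
`cosh (u - v) + 2 sin² (θ/2) sinh u sinh v ≤ cosh (u + v - 2s) = cosh (u - v) + 2 sinh (u - s) sinh (v - s)`,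
and `sinh (x - s) ≤ e⁻ˢ sinh x` turns this into `sin² (θ/2) ≤ e⁻²ˢ`. The logarithmic form follows
from Jordan's inequality `θ/π ≤ sin (θ/2)`.
-/

open Real

lemma cosh_mul_cosh_sub_sinh_mul_sinh_mul_cos (u v θ : ℝ) :
    cosh u * cosh v - sinh u * sinh v * cos θ =
      cosh (u - v) + 2 * sin (θ / 2) ^ 2 * (sinh u * sinh v) := by
  have hcos : cos θ = 1 - 2 * sin (θ / 2) ^ 2 := by
    rw [← cos_two_mul_eq_one_sub, mul_div_cancel₀ θ two_ne_zero]
  rw [cosh_sub, hcos]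
  ring

lemma cosh_add_sub_cosh_sub (x y : ℝ) :
    cosh (x + y) - cosh (x - y) = 2 * sinh x * sinh y := by
  rw [cosh_add, cosh_sub]
  ring

lemma sinh_sub_le_exp_neg_mul_sinh (x : ℝ) {s : ℝ} (hs : 0 ≤ s) :
    sinh (x - s) ≤ exp (-s) * sinh x := by
  calc sinh (x - s) = (exp (x - s) - exp (-(x - s))) / 2 := sinh_eq _
    _ ≤ (exp (x - s) - exp (-s - x)) / 2 := by gcongr; linarith
    _ = exp (-s) * sinh x := by
      rw [sinh_eq, mul_div_assoc', mul_sub, ← exp_add, ← exp_add]; ring_nf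

theorem sin_sq_half_le_exp_of_le_cosh {u v s θ : ℝ} (hu : 0 < u) (hv : 0 < v) (hs : 0 ≤ s)
    (hsv : s ≤ v)
    (hlaw : cosh u * cosh v - sinh u * sinh v * cos θ ≤ cosh (u + v - 2 * s)) :
    sin (θ / 2) ^ 2 ≤ exp (-(2 * s)) := by
  have hsinh : 0 < sinh u * sinh v := mul_pos (sinh_pos_iff.mpr hu) (sinh_pos_iff.mpr hv)
  have hfactor : cosh (u + v - 2 * s) - cosh (u - v) = 2 * sinh (u - s) * sinh (v - s) := by
    rw [← cosh_add_sub_cosh_sub]; ring_nf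
  rw [cosh_mul_cosh_sub_sinh_mul_sinh_mul_cos] at hlaw
  have hshift : sinh (u - s) * sinh (v - s) ≤ exp (-(2 * s)) * (sinh u * sinh v) :=
    calc sinh (u - s) * sinh (v - s)
        ≤ (exp (-s) * sinh u) * (exp (-s) * sinh v) :=
          mul_le_mul (sinh_sub_le_exp_neg_mul_sinh u hs) (sinh_sub_le_exp_neg_mul_sinh v hs)
            (sinh_nonneg_iff.mpr (by linarith)) (by positivity [sinh_pos_iff.mpr hu])
      _ = exp (-(2 * s)) * (sinh u * sinh v) := by
          rw [two_mul, neg_add, exp_add]; ring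
  refine le_of_mul_le_mul_right ?_ hsinh
  linarith

theorem le_log_pi_div_of_sin_sq_half_le_exp {θ t : ℝ} (hθ₀ : 0 < θ) (hθπ : θ ≤ π)
    (h : sin (θ / 2) ^ 2 ≤ exp (-(2 * t))) : t ≤ log (π / θ) := by
  have hjordan : θ / π ≤ sin (θ / 2) :=
    calc θ / π = 2 / π * (θ / 2) := by ring
      _ ≤ sin (θ / 2) := mul_le_sin (by linarith) (by linarith)
  have hsq : (θ / π) ^ 2 ≤ exp (-(2 * t)) :=
    (pow_le_pow_left₀ (by positivity) hjordan 2).trans h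
  have hlog : 2 * log (θ / π) ≤ -(2 * t) := by
    rw [← log_le_iff_le_exp (by positivity), log_pow] at hsq
    exact_mod_cast hsq
  rw [← inv_div, log_inv] at hlog
  linarith

theorem deficiency_angle_estimate (a ρ₁ ρ₂ d θ : ℝ) (ha : 0 < a) (h₁ : 0 < ρ₁) (h₂ : 0 < ρ₂)
    (hθ₀ : 0 < θ) (hθπ : θ ≤ Real.pi)
    (hd₁ : |ρ₁ - ρ₂| ≤ d) (hd₂ : d ≤ ρ₁ + ρ₂)
    (hlaw : Real.cosh (a * d) ≥
      Real.cosh (a * ρ₁) * Real.cosh (a * ρ₂) -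
        Real.sinh (a * ρ₁) * Real.sinh (a * ρ₂) * Real.cos θ) :
    Real.sin (θ / 2) ^ 2 ≤ Real.exp (-(a * (ρ₁ + ρ₂ - d))) ∧
      (a / 2) * (ρ₁ + ρ₂ - d) ≤ Real.log (Real.pi / θ) := by
  have hd : ρ₁ - ρ₂ ≤ d := (abs_le.mp hd₁).2
  have hsin : sin (θ / 2) ^ 2 ≤ exp (-(2 * (a / 2 * (ρ₁ + ρ₂ - d)))) := by
    refine sin_sq_half_le_exp_of_le_cosh (u := a * ρ₁) (v := a * ρ₂) (by positivity)
      (by positivity) ?_ ?_ ?_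
    · exact mul_nonneg (by positivity) (by linarith)
    · nlinarith
    · rwa [show a * ρ₁ + a * ρ₂ - 2 * (a / 2 * (ρ₁ + ρ₂ - d)) = a * d by ring]
  refine ⟨?_, le_log_pi_div_of_sin_sq_half_le_exp hθ₀ hθπ hsin⟩
  convert hsin using 3; ring
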